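/- The cubic locus of equal-cevian intersection points of triangle ABC (with A = (−1/2,0), B = (1/2,0), angles α at A, β at B, α ≠ β) intersects line AB exactly at x = −1/2, x = 1/2, and x = −sin(β−α)/(2 sin(β+α)); the last point is symmetric, with respect to the midpoint of AB, to the foot of the altitude from C. -/

import Mathlib

open EuclideanGeometry Real

noncomputable section

/-- The Euclidean plane. -/
abbrev Pt : Type := EuclideanSpace ℝ (Fin 2)

/-- The point of the Euclidean plane with the given coordinates. -/
def pt (x y : ℝ) : Pt := WithLp.toLp 2 ![x, y]

/-! Write `C = (c, h)` with `h ≠ 0`, `a = CA`, `b = CB`. Then `a cos α = c + 1/2`, `a sin α = |h|`,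
`b cos β = 1/2 - c`, `b sin β = |h|`, so the addition formulas give `ab sin (β + α) = |h|` and
`ab sin (β - α) = 2c|h|`, i.e. `sin (β - α) = 2c sin (β + α)`, and `c` is the abscissa of the foot
of the altitude. On `y = 0` the cubic factors as
`-sin α sin β (2 sin (β + α) x + sin (β - α)) (x - 1/2) (x + 1/2)`. -/

@[simp]
lemma pt_apply_zero (x y : ℝ) : pt x y 0 = x := rfl

@[simp]
lemma pt_apply_one (x y : ℝ) : pt x y 1 = y := rfl

lemma inner_fin_two (u v : EuclideanSpace ℝ (Fin 2)) :
    (inner ℝ u v : ℝ) = u 0 * v 0 + u 1 * v 1 := by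
  simp [PiLp.inner_apply, Fin.sum_univ_two, mul_comm]

lemma sin_angle_mul_norm_mul_norm_fin_two (u v : EuclideanSpace ℝ (Fin 2)) :
    sin (InnerProductGeometry.angle u v) * (‖u‖ * ‖v‖) = |u 0 * v 1 - u 1 * v 0| := by
  rw [InnerProductGeometry.sin_angle_mul_norm_mul_norm, ← sqrt_sq_eq_abs]
  congr 1
  simp only [inner_fin_two]
  ring

lemma norm_pt_vsub_pt_of_base (p q : ℝ) : ‖pt q 0 -ᵥ pt p 0‖ = |q - p| := by
  rw [EuclideanSpace.norm_eq, ← sqrt_sq_eq_abs]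
  simp [Fin.sum_univ_two]

lemma cos_angle_mul_dist_of_base (p q : ℝ) (C : Pt) :
    cos (∠ (pt q 0) (pt p 0) C) * (|q - p| * dist C (pt p 0)) = (q - p) * (C 0 - p) := by
  rw [EuclideanGeometry.angle, ← norm_pt_vsub_pt_of_base, dist_eq_norm_vsub,
    InnerProductGeometry.cos_angle_mul_norm_mul_norm, inner_fin_two]
  simp

lemma sin_angle_mul_dist_of_base (p q : ℝ) (C : Pt) :
    sin (∠ (pt q 0) (pt p 0) C) * (|q - p| * dist C (pt p 0)) = |q - p| * |C 1| := by
  rw [EuclideanGeometry.angle, ← norm_pt_vsub_pt_of_base, dist_eq_norm_vsub,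
    sin_angle_mul_norm_mul_norm_fin_two, norm_pt_vsub_pt_of_base, ← abs_mul]
  simp

lemma sin_angle_of_base_pos {p q : ℝ} (hpq : p ≠ q) {C : Pt} (hC : C 1 ≠ 0) :
    0 < sin (∠ (pt q 0) (pt p 0) C) := by
  have hprod : 0 < sin (∠ (pt q 0) (pt p 0) C) * (|q - p| * dist C (pt p 0)) := by
    rw [sin_angle_mul_dist_of_base]
    have : q - p ≠ 0 := sub_ne_zero.mpr hpq.symm
    positivity
  exact pos_of_mul_pos_left hprod (by positivity)

local notation "A₀" => pt (-(1 / 2)) 0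
local notation "B₀" => pt (1 / 2) 0

section BaseTriangle

variable (C : Pt)

lemma base_angles_polar :
    cos (∠ B₀ A₀ C) * dist C A₀ = C 0 + 1 / 2 ∧ sin (∠ B₀ A₀ C) * dist C A₀ = |C 1| ∧
      cos (∠ A₀ B₀ C) * dist C B₀ = 1 / 2 - C 0 ∧ sin (∠ A₀ B₀ C) * dist C B₀ = |C 1| := by
  have hcA := cos_angle_mul_dist_of_base (-(1 / 2)) (1 / 2) C
  have hsA := sin_angle_mul_dist_of_base (-(1 / 2)) (1 / 2) C
  have hcB := cos_angle_mul_dist_of_base (1 / 2) (-(1 / 2)) C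
  have hsB := sin_angle_mul_dist_of_base (1 / 2) (-(1 / 2)) C
  norm_num at hcA hsA hcB hsB
  exact ⟨hcA, hsA, by linarith, hsB⟩

lemma sin_add_angles_mul_dist_mul_dist :
    sin (∠ A₀ B₀ C + ∠ B₀ A₀ C) * (dist C A₀ * dist C B₀) = |C 1| := by
  obtain ⟨hcA, hsA, hcB, hsB⟩ := base_angles_polar C
  rw [sin_add]
  linear_combination (cos (∠ B₀ A₀ C) * dist C A₀) * hsB + |C 1| * hcA
    + (sin (∠ B₀ A₀ C) * dist C A₀) * hcB + (1 / 2 - C 0) * hsA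

lemma sin_sub_angles_mul_dist_mul_dist :
    sin (∠ A₀ B₀ C - ∠ B₀ A₀ C) * (dist C A₀ * dist C B₀) = 2 * C 0 * |C 1| := by
  obtain ⟨hcA, hsA, hcB, hsB⟩ := base_angles_polar C
  rw [sin_sub]
  linear_combination (cos (∠ B₀ A₀ C) * dist C A₀) * hsB + |C 1| * hcA
    - (sin (∠ B₀ A₀ C) * dist C A₀) * hcB - (1 / 2 - C 0) * hsA

variable {C}

lemma sin_add_angles_pos (hC : C 1 ≠ 0) : 0 < sin (∠ A₀ B₀ C + ∠ B₀ A₀ C) := by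
  have hprod := sin_add_angles_mul_dist_mul_dist C
  exact pos_of_mul_pos_left (hprod ▸ abs_pos.mpr hC) (by positivity)

lemma sin_sub_angles_eq (hC : C 1 ≠ 0) :
    sin (∠ A₀ B₀ C - ∠ B₀ A₀ C) = 2 * C 0 * sin (∠ A₀ B₀ C + ∠ B₀ A₀ C) := by
  have hadd := sin_add_angles_mul_dist_mul_dist C
  have hdist : dist C A₀ * dist C B₀ ≠ 0 := by
    intro h
    rw [h, mul_zero] at hadd
    exact hC (abs_eq_zero.mp hadd.symm)
  apply mul_right_cancel₀ hdist
  rw [sin_sub_angles_mul_dist_mul_dist]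
  linear_combination -(2 * C 0) * hadd

end BaseTriangle

/-- The cubic locus of the paper, in the coordinates `A = (-1/2, 0)`, `B = (1/2, 0)`. -/
def cevianCubic (α β x y : ℝ) : ℝ :=
  (x ^ 2 + y ^ 2) * sin (β + α) * (y * sin (β - α) - 2 * x * sin α * sin β)
    + (y ^ 2 - x ^ 2) * sin α * sin β * sin (β - α)
    + x * y * (sin α ^ 2 * cos β ^ 2 + sin β ^ 2 * cos α ^ 2 - 2 * sin α ^ 2 * sin β ^ 2)
    + 1 / 2 * x * sin α * sin β * sin (β + α)
    + 1 / 4 * y * sin (β - α) * sin (β + α)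
    + 1 / 4 * sin α * sin β * sin (β - α)

lemma cevianCubic_base (α β x : ℝ) :
    cevianCubic α β x 0 =
      -(sin α * sin β) * ((2 * sin (β + α) * x + sin (β - α)) * ((x + 1 / 2) * (x - 1 / 2))) := by
  unfold cevianCubic
  ring

lemma cevianCubic_base_eq_zero_iff {α β : ℝ} (hα : sin α ≠ 0) (hβ : sin β ≠ 0)
    (hS : sin (β + α) ≠ 0) (x : ℝ) :
    cevianCubic α β x 0 = 0 ↔
      x = -(1 / 2) ∨ x = 1 / 2 ∨ x = -sin (β - α) / (2 * sin (β + α)) := by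
  have hroot : x = -sin (β - α) / (2 * sin (β + α)) ↔ 2 * sin (β + α) * x + sin (β - α) = 0 := by
    rw [eq_div_iff (mul_ne_zero two_ne_zero hS)]
    constructor <;> intro h <;> linarith
  rw [cevianCubic_base, hroot]
  simp only [mul_eq_zero, neg_eq_zero, hα, hβ, or_self, false_or, add_eq_zero_iff_eq_neg,
    sub_eq_zero]
  tauto

theorem cubic_locus_meets_base_general (A B C H : Pt) (α β : ℝ)
    (hA : A = pt (-(1 / 2)) 0) (hB : B = pt (1 / 2) 0)
    (hCup : 0 < C 1)
    (hα : ∠ B A C = α) (hβ : ∠ A B C = β)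
    (hCH : (inner ℝ (C -ᵥ H) (B -ᵥ A) : ℝ) = 0) :
    (∀ x : ℝ,
      (x ^ 2 + (0 : ℝ) ^ 2) * sin (β + α)
          * ((0 : ℝ) * sin (β - α) - 2 * x * sin α * sin β)
        + ((0 : ℝ) ^ 2 - x ^ 2) * sin α * sin β * sin (β - α)
        + x * 0 * (sin α ^ 2 * cos β ^ 2 + sin β ^ 2 * cos α ^ 2
            - 2 * sin α ^ 2 * sin β ^ 2)
        + 1 / 2 * x * sin α * sin β * sin (β + α)
        + 1 / 4 * (0 : ℝ) * sin (β - α) * sin (β + α)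
        + 1 / 4 * sin α * sin β * sin (β - α) = 0 ↔
        x = -(1 / 2) ∨ x = 1 / 2 ∨ x = -sin (β - α) / (2 * sin (β + α))) ∧
    -sin (β - α) / (2 * sin (β + α)) = -(H 0) := by
  subst hA hB hα hβ
  have hC : C 1 ≠ 0 := hCup.ne'
  have hS := (sin_add_angles_pos hC).ne'
  have hfoot : H 0 = C 0 := by
    rw [inner_fin_two] at hCH
    norm_num at hCH
    linarith
  refine ⟨cevianCubic_base_eq_zero_iff (sin_angle_of_base_pos (by norm_num) hC).ne'
    (sin_angle_of_base_pos (by norm_num) hC).ne' hS, ?_⟩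
  rw [sin_sub_angles_eq hC, hfoot]
  field_simp

/-- The cubic equal-cevian locus of a triangle with `A = (−1/2, 0)`, `B = (1/2, 0)`,
angles `α ≠ β` at `A` and `B`, meets the line `AB` (i.e. `y = 0`) exactly at
`x = −1/2`, `x = 1/2` and `x = −sin(β−α)/(2 sin(β+α))`; the last point is symmetric,
with respect to the midpoint of `AB`, to the foot `H` of the altitude from `C`. -/
theorem cubic_locus_meets_base (A B C H : Pt) (α β : ℝ)
    (hA : A = pt (-(1 / 2)) 0) (hB : B = pt (1 / 2) 0)
    (hABC : AffineIndependent ℝ ![A, B, C])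
    (hCup : 0 < C 1)
    (hα : ∠ B A C = α) (hβ : ∠ A B C = β) (hne : α ≠ β)
    (hH : H ∈ affineSpan ℝ ({A, B} : Set Pt))
    (hCH : (inner ℝ (C -ᵥ H) (B -ᵥ A) : ℝ) = 0) :
    (∀ x : ℝ,
      (x ^ 2 + (0 : ℝ) ^ 2) * sin (β + α)
          * ((0 : ℝ) * sin (β - α) - 2 * x * sin α * sin β)
        + ((0 : ℝ) ^ 2 - x ^ 2) * sin α * sin β * sin (β - α)
        + x * 0 * (sin α ^ 2 * cos β ^ 2 + sin β ^ 2 * cos α ^ 2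
            - 2 * sin α ^ 2 * sin β ^ 2)
        + 1 / 2 * x * sin α * sin β * sin (β + α)
        + 1 / 4 * (0 : ℝ) * sin (β - α) * sin (β + α)
        + 1 / 4 * sin α * sin β * sin (β - α) = 0 ↔
        x = -(1 / 2) ∨ x = 1 / 2 ∨ x = -sin (β - α) / (2 * sin (β + α))) ∧
    -sin (β - α) / (2 * sin (β + α)) = -(H 0) :=
  cubic_locus_meets_base_general A B C H α β hA hB hCup hα hβ hCH
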